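/- If u, v, and uv are Christoffel words, then the morphisms 0 ↦ u, 1 ↦ v and 0 ↦ v, 1 ↦ u are Sturmian morphisms. -/

import Mathlib

/-- The prefix of length `n` of an infinite binary word. -/
def pref (w : ℕ → Bool) (n : ℕ) : List Bool := (List.range n).map w

/-- `u` occurs as a factor of the infinite word `w`. -/
def FactorInf (u : List Bool) (w : ℕ → Bool) : Prop :=
  ∃ i, u = (List.range u.length).map (fun j => w (i + j))

/-- An infinite binary word is Sturmian if it has exactly `n+1` factors of each length `n`. -/
def Sturmian (w : ℕ → Bool) : Prop :=
  ∀ n, Set.ncard {u : List Bool | u.length = n ∧ FactorInf u w} = n + 1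

/-- A finite binary word is balanced if the numbers of occurrences of `true`
in any two factors of equal length differ by at most 1. -/
def BalancedWord (w : List Bool) : Prop :=
  ∀ u v : List Bool, u <:+: w → v <:+: w → u.length = v.length →
    u.count true ≤ v.count true + 1

/-- A word `u` is central if it is a palindrome and both `0u1` and `1u0` are balanced. -/
def Central (u : List Bool) : Prop :=
  u.reverse = u ∧ BalancedWord (false :: (u ++ [true])) ∧ BalancedWord (true :: (u ++ [false]))

/-- Lower Christoffel words: the letters `0`, `1` and the words `0u1` with `u` central. -/
def IsLowerChristoffel (v : List Bool) : Prop :=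
  v = [false] ∨ v = [true] ∨ ∃ u, Central u ∧ v = false :: (u ++ [true])

/-- Upper Christoffel words: the letters `0`, `1` and the words `1u0` with `u` central. -/
def IsUpperChristoffel (v : List Bool) : Prop :=
  v = [false] ∨ v = [true] ∨ ∃ u, Central u ∧ v = true :: (u ++ [false])

/-- Christoffel words (lower or upper). -/
def IsChristoffel (v : List Bool) : Prop := IsLowerChristoffel v ∨ IsUpperChristoffel v

/-- A finite word is a prefix of an infinite word. -/
def PrefixOf (u : List Bool) (w : ℕ → Bool) : Prop := u = pref w u.length

/-- Apply the morphism `0 ↦ f0, 1 ↦ f1` to a finite word. -/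
def applyM (f0 f1 : List Bool) (u : List Bool) : List Bool :=
  u.flatMap (fun b => bif b then f1 else f0)

/-- `w'` is the image of the infinite word `w` under the morphism `0 ↦ f0, 1 ↦ f1`
(acting by concatenating the images of the letters). -/
def MorphImage (f0 f1 : List Bool) (w w' : ℕ → Bool) : Prop :=
  (∀ n, PrefixOf (applyM f0 f1 (pref w n)) w') ∧
    ∀ n, ∃ m, n ≤ (applyM f0 f1 (pref w m)).length

/-- A morphism is Sturmian if it maps every Sturmian word to a Sturmian word. -/
def IsSturmianMorphism (f0 f1 : List Bool) : Prop :=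
  ∀ w w', Sturmian w → MorphImage f0 f1 w w' → Sturmian w'

/-!
Pairs `(u, v)` with `u`, `v`, `uv` lower Christoffel words form the Christoffel tree: they are
generated from `(0, 1)` by `(u, v) ↦ (u, uv)` and `(u, v) ↦ (uv, v)`. Indeed, writing `uv = 0c1`
with `c` central, comparing the palindromes `c`, `s`, `t` in `u = 0s1`, `v = 0t1` forces `v = uy`
or `u = yv` for a shorter Christoffel word `y`. As `(u, uv)` and `(uv, v)` are the composites of
`(u, v)` with `G = (0, 01)` and `D̃ = (01, 1)`, and `(v, u)` is its composite with the exchange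
`E = (1, 0)`, it suffices that `G`, `D̃` and `E` are Sturmian.

A word is Sturmian iff it has exactly one right special factor of each length. The right special
factors of `G(w)` are suffixes of words `G(x)0` with `x` right special in `w`; since the right
special factors of a Sturmian word are suffixes of one another, `G(w)` has exactly one of each
length. Finally `D(w) = 1 D̃(w)` for `D = E G E`, and a Sturmian word stays Sturmian when its first
letter is removed, because a word lacking right special factors of some length is eventually
periodic.
-/

def window (w : ℕ → Bool) (i n : ℕ) : List Bool := (List.range n).map (fun j => w (i + j))

def factors (w : ℕ → Bool) (n : ℕ) : Set (List Bool) := {u | u.length = n ∧ FactorInf u w}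

noncomputable def complexity (w : ℕ → Bool) (n : ℕ) : ℕ := (factors w n).ncard

def rightSpecial (w : ℕ → Bool) (n : ℕ) : Set (List Bool) :=
  {z | z.length = n ∧ FactorInf (z ++ [false]) w ∧ FactorInf (z ++ [true]) w}

section Factors

variable {w : ℕ → Bool}

@[simp] lemma length_window (w : ℕ → Bool) (i n : ℕ) : (window w i n).length = n := by
  simp [window]

lemma window_add (w : ℕ → Bool) (i a b : ℕ) :
    window w i (a + b) = window w i a ++ window w (i + a) b := by
  simp [window, List.range_add, Function.comp_def, add_assoc]

lemma window_one (w : ℕ → Bool) (i : ℕ) : window w i 1 = [w i] := by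
  simp [window]

lemma window_add_two (w : ℕ → Bool) (i n : ℕ) :
    window w i (n + 2) = window w i n ++ [w (i + n), w (i + n + 1)] := by
  simp [window, List.range_succ, add_assoc]

lemma drop_window (w : ℕ → Bool) (i : ℕ) {n k : ℕ} (h : k ≤ n) :
    (window w i n).drop k = window w (i + k) (n - k) := by
  conv_lhs => rw [← Nat.add_sub_cancel' h, window_add]
  simp

lemma pref_eq_window (w : ℕ → Bool) (n : ℕ) : pref w n = window w 0 n := by
  simp [pref, window]

lemma factorInf_iff {u : List Bool} : FactorInf u w ↔ ∃ i, window w i u.length = u := by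
  simp only [FactorInf, window, eq_comm]

lemma factorInf_window (w : ℕ → Bool) (i n : ℕ) : FactorInf (window w i n) w :=
  factorInf_iff.2 ⟨i, by rw [length_window]⟩

lemma FactorInf.of_infix {u v : List Bool} (hu : FactorInf u w) (h : v <:+: u) :
    FactorInf v w := by
  obtain ⟨s, t, rfl⟩ := h
  obtain ⟨i, hi⟩ := factorInf_iff.1 hu
  simp only [List.length_append, window_add] at hi
  exact factorInf_iff.2
    ⟨i + s.length, (List.append_inj (List.append_inj hi (by simp)).1 (by simp)).2⟩

lemma factors_finite (w : ℕ → Bool) (n : ℕ) : (factors w n).Finite :=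
  (List.finite_length_eq Bool n).subset fun _ hu => hu.1

lemma rightSpecial_subset_factors (w : ℕ → Bool) (n : ℕ) : rightSpecial w n ⊆ factors w n :=
  fun _ ⟨hz, hf, _⟩ => ⟨hz, hf.of_infix (List.prefix_append _ _).isInfix⟩

lemma complexity_zero (w : ℕ → Bool) : complexity w 0 = 1 := by
  have : factors w 0 = {[]} := by
    ext u
    simpa [factors, List.length_eq_zero_iff] using fun hu : u = [] => hu ▸ factorInf_window w 0 0
  simp [complexity, this]

end Factors

section Complexity

variable {w : ℕ → Bool}

lemma exists_factorInf_append_singleton {z : List Bool} (hz : FactorInf z w) :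
    ∃ b, FactorInf (z ++ [b]) w := by
  obtain ⟨i, hi⟩ := factorInf_iff.1 hz
  exact ⟨w (i + z.length), factorInf_iff.2 ⟨i, by simp [window_add, window_one, hi]⟩⟩

lemma complexity_succ (w : ℕ → Bool) (n : ℕ) :
    complexity w (n + 1) = complexity w n + (rightSpecial w n).ncard := by
  set E : Bool → Set (List Bool) := fun b => {z | z.length = n ∧ FactorInf (z ++ [b]) w}
  have hfin : ∀ b, (E b).Finite := fun b =>
    (List.finite_length_eq Bool n).subset fun _ hz => hz.1
  have hinj : ∀ b : Bool, Function.Injective (· ++ [b]) := fun b => List.append_left_injective [b]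
  have hsplit : factors w (n + 1) = (· ++ [false]) '' E false ∪ (· ++ [true]) '' E true := by
    ext u
    rcases List.eq_nil_or_concat u with rfl | ⟨z, b, rfl⟩
    · simp [factors]
    · cases b <;> simp [factors, E]
  have hdisj : Disjoint ((· ++ [false]) '' E false) ((· ++ [true]) '' E true) := by
    rw [Set.disjoint_left]
    rintro _ ⟨z, -, rfl⟩ ⟨z', -, h⟩
    simpa using (List.append_inj' h rfl).2
  have hunion : E false ∪ E true = factors w n := by
    ext z
    constructor
    · rintro (⟨hz, hf⟩ | ⟨hz, hf⟩) <;> exact ⟨hz, hf.of_infix (List.prefix_append _ _).isInfix⟩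
    · rintro ⟨hz, hf⟩
      obtain ⟨b, hb⟩ := exists_factorInf_append_singleton hf
      cases b
      exacts [Or.inl ⟨hz, hb⟩, Or.inr ⟨hz, hb⟩]
  have hinter : E false ∩ E true = rightSpecial w n := by
    ext z
    simp only [E, rightSpecial, Set.mem_inter_iff, Set.mem_ofPred_eq]
    tauto
  have := Set.ncard_union_add_ncard_inter _ _ (hfin false) (hfin true)
  rw [hunion, hinter] at this
  rw [complexity, hsplit, Set.ncard_union_eq hdisj ((hfin _).image _) ((hfin _).image _),
    Set.ncard_image_of_injective _ (hinj _), Set.ncard_image_of_injective _ (hinj _), complexity]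
  omega

lemma rightSpecial_drop {n : ℕ} {z : List Bool} (hz : z ∈ rightSpecial w n) (k : ℕ) :
    z.drop k ∈ rightSpecial w (n - k) := by
  obtain ⟨hl, h0, h1⟩ := hz
  have hsuf : ∀ b : Bool, z.drop k ++ [b] <:+: z ++ [b] := fun b =>
    (List.suffix_append_self_iff.2 (List.drop_suffix k z)).isInfix
  exact ⟨by simp [hl], h0.of_infix (hsuf _), h1.of_infix (hsuf _)⟩

end Complexity

section Sturmian

variable {w : ℕ → Bool}

lemma sturmian_iff_complexity : Sturmian w ↔ ∀ n, complexity w n = n + 1 := Iff.rfl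

lemma sturmian_iff_ncard_rightSpecial : Sturmian w ↔ ∀ n, (rightSpecial w n).ncard = 1 := by
  rw [sturmian_iff_complexity]
  refine ⟨fun h n => ?_, fun h n => ?_⟩
  · have := complexity_succ w n
    rw [h, h] at this
    omega
  · induction n with
    | zero => exact complexity_zero w
    | succ n ih => rw [complexity_succ, ih, h]

lemma Sturmian.rightSpecial_nonempty (hw : Sturmian w) (n : ℕ) : (rightSpecial w n).Nonempty :=
  Set.nonempty_of_ncard_ne_zero (by rw [sturmian_iff_ncard_rightSpecial.1 hw n]; simp)

lemma Sturmian.rightSpecial_subsingleton (hw : Sturmian w) (n : ℕ) :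
    (rightSpecial w n).Subsingleton := by
  obtain ⟨z, hz⟩ := Set.ncard_eq_one.1 (sturmian_iff_ncard_rightSpecial.1 hw n)
  rw [hz]
  exact Set.subsingleton_singleton

lemma Sturmian.suffix_or_suffix_of_mem_rightSpecial (hw : Sturmian w) {x y : List Bool} {m m' : ℕ}
    (hx : x ∈ rightSpecial w m) (hy : y ∈ rightSpecial w m') : x <:+ y ∨ y <:+ x := by
  have key : ∀ {x y : List Bool} {m m' : ℕ}, x ∈ rightSpecial w m → y ∈ rightSpecial w m' →
      m ≤ m' → x <:+ y := by
    intro x y m m' hx hy hle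
    have hdrop := rightSpecial_drop hy (m' - m)
    rw [Nat.sub_sub_self hle] at hdrop
    exact hw.rightSpecial_subsingleton m hx hdrop ▸ List.drop_suffix _ _
  rcases le_total m m' with h | h
  exacts [Or.inl (key hx hy h), Or.inr (key hy hx h)]

lemma sturmian_of_complexity_le (hne : ∀ n, (rightSpecial w n).Nonempty)
    (hle : ∀ n, complexity w n ≤ n + 1) : Sturmian w := by
  have hge : ∀ n, n + 1 ≤ complexity w n := by
    intro n
    induction n with
    | zero => rw [complexity_zero]
    | succ n ih =>
      have := (Set.ncard_pos ((factors_finite w n).subset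
        (rightSpecial_subset_factors w n))).2 (hne n)
      rw [complexity_succ]
      omega
  exact fun n => le_antisymm (hle n) (hge n)

end Sturmian

def EventuallyPeriodic (w : ℕ → Bool) : Prop :=
  ∃ k d, 0 < d ∧ Function.Periodic (fun m => w (k + m)) d

section Periodic

variable {w : ℕ → Bool}

/-- Without right special factors of length `n`, a factor of length `n` determines the next
letter, so two equal windows of length `n` stay equal when shifted. -/
lemma eventuallyPeriodic_of_rightSpecial_eq_empty {n : ℕ} (h : rightSpecial w n = ∅) :
    EventuallyPeriodic w := by
  have hnext : ∀ i j, window w i n = window w j n → w (i + n) = w (j + n) := by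
    intro i j hij
    by_contra hne
    have hext : ∀ i, FactorInf (window w i n ++ [w (i + n)]) w := fun i => by
      simpa [← window_one, ← window_add] using factorInf_window w i (n + 1)
    have hall : ∀ b, FactorInf (window w i n ++ [b]) w := fun b => by
      rcases (show b = w (i + n) ∨ b = w (j + n) by
        revert hne; cases b <;> cases w (i + n) <;> cases w (j + n) <;> simp) with rfl | rfl
      exacts [hext i, hij ▸ hext j]
    have : window w i n ∈ rightSpecial w n := ⟨length_window w i n, hall _, hall _⟩
    simp [h] at this
  have hshift : ∀ i j, window w i n = window w j n → window w (i + 1) n = window w (j + 1) n := by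
    intro i j hij
    have htail : ∀ i, window w (i + 1) n = (window w i n ++ [w (i + n)]).tail := fun i => by
      rw [← window_one, ← window_add, add_comm n 1, window_add, window_one]
      rfl
    rw [htail, htail, hij, hnext i j hij]
  have hfollow : ∀ m i j, window w i n = window w j n → w (i + m + n) = w (j + m + n) := by
    intro m
    induction m with
    | zero => exact hnext
    | succ m ih =>
      intro i j hij
      have := ih _ _ (hshift i j hij)
      rwa [add_right_comm i, add_right_comm j] at this
  have hmaps : Set.MapsTo (fun i => window w i n) Set.univ (factors w n) :=
    fun i _ => ⟨length_window w i n, factorInf_window w i n⟩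
  obtain ⟨a, -, b, -, hab, heq⟩ :=
    Set.infinite_univ.exists_lt_map_eq_of_mapsTo hmaps (factors_finite w n)
  refine ⟨a + n, b - a, by omega, fun m => ?_⟩
  show w (a + n + (m + (b - a))) = w (a + n + m)
  rw [show a + n + (m + (b - a)) = b + m + n by omega, add_right_comm a n m]
  exact (hfollow m a b heq).symm

lemma EventuallyPeriodic.exists_complexity_le (h : EventuallyPeriodic w) :
    ∃ C, ∀ n, complexity w n ≤ C := by
  obtain ⟨k, d, hd, hper⟩ := h
  refine ⟨k + d, fun n => ?_⟩
  have hwin : ∀ i, ∃ i' < k + d, window w i' n = window w i n := by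
    intro i
    rcases lt_or_ge i k with hik | hik
    · exact ⟨i, by omega, rfl⟩
    refine ⟨k + (i - k) % d, by have := Nat.mod_lt (i - k) hd; omega, ?_⟩
    simp only [window, List.map_inj_left, List.mem_range]
    intro j _
    have e₁ := hper.map_mod_nat ((i - k) % d + j)
    have e₂ := hper.map_mod_nat (i - k + j)
    simp only [Nat.mod_add_mod] at e₁
    rw [add_assoc, ← e₁, e₂, show k + (i - k + j) = i + j by omega]
  have hsub : factors w n ⊆ ((Finset.range (k + d)).image fun i => window w i n : Set _) := by
    rintro u ⟨hl, hu⟩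
    obtain ⟨i, rfl⟩ := hl ▸ factorInf_iff.1 hu
    obtain ⟨i', hi', heq⟩ := hwin i
    exact Finset.mem_coe.2 (Finset.mem_image.2 ⟨i', Finset.mem_range.2 hi', heq⟩)
  calc complexity w n ≤ ((Finset.range (k + d)).image fun i => window w i n).card := by
        rw [← Set.ncard_coe_finset]; exact Set.ncard_le_ncard hsub
    _ ≤ k + d := Finset.card_image_le.trans (by simp)

lemma Sturmian.not_eventuallyPeriodic (hw : Sturmian w) : ¬ EventuallyPeriodic w := by
  intro h
  obtain ⟨C, hC⟩ := h.exists_complexity_le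
  have := hC C
  rw [sturmian_iff_complexity.1 hw] at this
  omega

def consWord (a : Bool) (w : ℕ → Bool) : ℕ → Bool
  | 0 => a
  | n + 1 => w n

lemma window_cons_succ (a : Bool) (w : ℕ → Bool) (i n : ℕ) :
    window (consWord a w) (i + 1) n = window w i n := by
  simp only [window, add_right_comm i 1]
  rfl

lemma Sturmian.of_cons {a : Bool} (h : Sturmian (consWord a w)) : Sturmian w := by
  refine sturmian_of_complexity_le (fun n => ?_) (fun n => ?_)
  · by_contra hn
    obtain ⟨k, d, hd, hper⟩ :=
      eventuallyPeriodic_of_rightSpecial_eq_empty (Set.not_nonempty_iff_eq_empty.1 hn)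
    refine h.not_eventuallyPeriodic ⟨k + 1, d, hd, fun m => ?_⟩
    show consWord a w (k + 1 + (m + d)) = consWord a w (k + 1 + m)
    rw [add_right_comm k 1, add_right_comm k 1]
    exact hper m
  · have hsub : factors w n ⊆ factors (consWord a w) n := by
      rintro u ⟨hl, hu⟩
      obtain ⟨i, rfl⟩ := hl ▸ factorInf_iff.1 hu
      exact ⟨length_window w i n, window_cons_succ a w i n ▸ factorInf_window _ (i + 1) n⟩
    exact (Set.ncard_le_ncard hsub (factors_finite _ n)).trans_eq (h n)

end Periodic

section Morphisms

variable {f0 f1 g0 g1 : List Bool} {w w' : ℕ → Bool}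

@[simp] lemma applyM_nil (f0 f1 : List Bool) : applyM f0 f1 [] = [] := rfl

@[simp] lemma applyM_cons (f0 f1 : List Bool) (b : Bool) (l : List Bool) :
    applyM f0 f1 (b :: l) = (bif b then f1 else f0) ++ applyM f0 f1 l := by
  simp [applyM]

@[simp] lemma applyM_append (f0 f1 l l' : List Bool) :
    applyM f0 f1 (l ++ l') = applyM f0 f1 l ++ applyM f0 f1 l' := by
  simp [applyM]

lemma applyM_applyM (f0 f1 g0 g1 l : List Bool) :
    applyM (applyM f0 f1 g0) (applyM f0 f1 g1) l = applyM f0 f1 (applyM g0 g1 l) := by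
  induction l with
  | nil => rfl
  | cons b l ih => cases b <;> simp [ih]

lemma length_le_length_applyM (h0 : f0 ≠ []) (h1 : f1 ≠ []) (l : List Bool) :
    l.length ≤ (applyM f0 f1 l).length := by
  induction l with
  | nil => simp
  | cons b l ih =>
    have := List.length_pos_iff.2 h0
    have := List.length_pos_iff.2 h1
    cases b <;> simp <;> omega

lemma applyM_prefix (f0 f1 : List Bool) {l l' : List Bool} (h : l <+: l') :
    applyM f0 f1 l <+: applyM f0 f1 l' := by
  obtain ⟨t, rfl⟩ := h
  exact ⟨applyM f0 f1 t, (applyM_append f0 f1 l t).symm⟩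

lemma applyM_suffix (f0 f1 : List Bool) {l l' : List Bool} (h : l <:+ l') :
    applyM f0 f1 l <:+ applyM f0 f1 l' := by
  obtain ⟨t, rfl⟩ := h
  exact ⟨applyM f0 f1 t, (applyM_append f0 f1 t l).symm⟩

lemma applyM_singleton_singleton (a0 a1 : Bool) (l : List Bool) :
    applyM [a0] [a1] l = l.map fun b => bif b then a1 else a0 := by
  induction l with
  | nil => rfl
  | cons b l ih => cases b <;> simp [ih]

@[simp] lemma length_pref (w : ℕ → Bool) (n : ℕ) : (pref w n).length = n := by simp [pref]

lemma pref_succ (w : ℕ → Bool) (n : ℕ) : pref w (n + 1) = pref w n ++ [w n] := by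
  simp [pref, List.range_succ]

lemma pref_cons_succ (a : Bool) (w : ℕ → Bool) (n : ℕ) :
    pref (consWord a w) (n + 1) = a :: pref w n := by
  unfold pref
  rw [List.range_succ_eq_map, List.map_cons, List.map_map]
  rfl

lemma take_pref (w : ℕ → Bool) (n m : ℕ) : (pref w m).take n = pref w (min n m) := by
  simp [pref, ← List.map_take, List.take_range]

lemma pref_prefix_pref (w : ℕ → Bool) {n m : ℕ} (h : n ≤ m) : pref w n <+: pref w m := by
  rw [List.prefix_iff_eq_take, take_pref, length_pref, min_eq_left h]

lemma prefixOf_iff_getElem {u : List Bool} : PrefixOf u w ↔ ∀ j (h : j < u.length), u[j] = w j :=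
  ⟨fun h j hj => by rw [List.getElem_of_eq (show u = _ from h)]; simp [pref],
    fun h => List.ext_getElem (by simp) fun j h₁ _ => by simp [h j h₁, pref]⟩

lemma PrefixOf.pref_prefix {u : List Bool} (h : PrefixOf u w) {k : ℕ} (hk : k ≤ u.length) :
    pref w k <+: u :=
  h ▸ pref_prefix_pref w hk

lemma PrefixOf.of_prefix {x u : List Bool} (hu : PrefixOf u w) (h : x <+: u) : PrefixOf x w := by
  rw [PrefixOf, List.prefix_iff_eq_take.1 h]
  nth_rw 1 [hu]
  rw [take_pref, min_eq_left h.length_le, List.length_take, min_eq_left h.length_le]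

lemma exists_prefixOf_of_monotone {L : ℕ → List Bool} (hmono : ∀ n m, n ≤ m → L n <+: L m)
    (hlen : ∀ n, n ≤ (L n).length) : ∃ w : ℕ → Bool, ∀ n, PrefixOf (L n) w := by
  refine ⟨fun j => (L (j + 1)).getD j false, fun n => prefixOf_iff_getElem.2 fun j hj => ?_⟩
  have hj' : j < (L (j + 1)).length := by have := hlen (j + 1); omega
  simp only [List.getD_eq_getElem _ _ hj']
  rcases le_total n (j + 1) with h | h
  exacts [(hmono _ _ h).getElem hj, ((hmono _ _ h).getElem hj').symm]

lemma exists_morphImage (h0 : g0 ≠ []) (h1 : g1 ≠ []) (w : ℕ → Bool) :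
    ∃ w', MorphImage g0 g1 w w' := by
  have hlen : ∀ n, n ≤ (applyM g0 g1 (pref w n)).length := fun n => by
    simpa using length_le_length_applyM h0 h1 (pref w n)
  obtain ⟨w', hw'⟩ := exists_prefixOf_of_monotone (L := fun n => applyM g0 g1 (pref w n))
    (fun n m h => applyM_prefix g0 g1 (pref_prefix_pref w h)) hlen
  exact ⟨w', hw', fun n => ⟨n, hlen n⟩⟩

end Morphisms

section SturmianMorphisms

variable {f0 f1 g0 g1 : List Bool} {w w' : ℕ → Bool}

lemma Sturmian.comp_injective (hw : Sturmian w) {g : Bool → Bool} (hg : Function.Injective g) :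
    Sturmian (g ∘ w) := by
  intro n
  have hwin : ∀ i, window (g ∘ w) i n = (window w i n).map g := fun i => by simp [window]
  have : factors (g ∘ w) n = List.map g '' factors w n := by
    ext u
    constructor
    · rintro ⟨hl, hu⟩
      obtain ⟨i, rfl⟩ := hl ▸ factorInf_iff.1 hu
      exact ⟨window w i n, ⟨length_window w i n, factorInf_window w i n⟩, (hwin i).symm⟩
    · rintro ⟨_, ⟨hl, hu⟩, rfl⟩
      obtain ⟨i, rfl⟩ := hl ▸ factorInf_iff.1 hu
      exact ⟨by simp, hwin i ▸ factorInf_window _ i n⟩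
  show (factors (g ∘ w) n).ncard = n + 1
  rw [this, Set.ncard_image_of_injective _ (List.map_injective_iff.2 hg)]
  exact hw n

lemma MorphImage.eq_of_singleton {a0 a1 : Bool} (h : MorphImage [a0] [a1] w w') :
    w' = fun n => bif w n then a1 else a0 := by
  funext n
  have := prefixOf_iff_getElem.1 (h.1 (n + 1)) n (by simp [applyM_singleton_singleton])
  simpa [applyM_singleton_singleton, pref] using this.symm

lemma isSturmianMorphism_singleton {a0 a1 : Bool} (h : a0 ≠ a1) : IsSturmianMorphism [a0] [a1] := by
  intro w w' hw hM
  rw [hM.eq_of_singleton]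
  refine hw.comp_injective (g := fun b => bif b then a1 else a0) ?_
  revert h
  cases a0 <;> cases a1 <;> decide

lemma IsSturmianMorphism.comp (hf : IsSturmianMorphism f0 f1) (hg : IsSturmianMorphism g0 g1)
    (h0 : g0 ≠ []) (h1 : g1 ≠ []) :
    IsSturmianMorphism (applyM f0 f1 g0) (applyM f0 f1 g1) := by
  intro w w' hw hM
  obtain ⟨w₁, hM₁⟩ := exists_morphImage h0 h1 w
  refine hf w₁ w' (hg w w₁ hw hM₁) ⟨fun k => ?_, fun n => ?_⟩
  · have hk : k ≤ (applyM g0 g1 (pref w k)).length := by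
      simpa using length_le_length_applyM h0 h1 (pref w k)
    have hpre := applyM_prefix f0 f1 ((hM₁.1 k).pref_prefix hk)
    rw [← applyM_applyM] at hpre
    exact (hM.1 k).of_prefix hpre
  · obtain ⟨m, hm⟩ := hM.2 n
    refine ⟨(applyM g0 g1 (pref w m)).length, ?_⟩
    rwa [← hM₁.1 m, ← applyM_applyM]

lemma IsSturmianMorphism.swap (h : IsSturmianMorphism f0 f1) : IsSturmianMorphism f1 f0 := by
  simpa [applyM] using
    h.comp (isSturmianMorphism_singleton (a0 := true) (a1 := false) (by decide)) (by simp) (by simp)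

lemma IsSturmianMorphism.of_conj {a : Bool} (hf : IsSturmianMorphism f0 f1)
    (hconj : ∀ l, a :: applyM g0 g1 l = applyM f0 f1 l ++ [a]) :
    IsSturmianMorphism g0 g1 := by
  intro w w' hw hM
  have hlen : ∀ l, (applyM g0 g1 l).length = (applyM f0 f1 l).length := fun l => by
    simpa using congrArg List.length (hconj l)
  refine Sturmian.of_cons (a := a) (hf w _ hw ⟨fun n => ?_, fun n => ?_⟩)
  · have hpre : PrefixOf (applyM f0 f1 (pref w n) ++ [a]) (consWord a w') := by
      rw [← hconj, PrefixOf, List.length_cons, pref_cons_succ, ← hM.1 n]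
    exact hpre.of_prefix (List.prefix_append _ _)
  · obtain ⟨m, hm⟩ := hM.2 n
    exact ⟨m, hlen _ ▸ hm⟩

end SturmianMorphisms

local notation "𝒢" => applyM [false] [false, true]

/-- The position in `𝒢 w` at which the image of the letter `w n` starts. -/
def gPos (w : ℕ → Bool) (n : ℕ) : ℕ := (𝒢 (pref w n)).length

/-- Inverse of `𝒢` on its image; a leading `1` is read as the image `01` of `1` with its `0`
cut off, so that `desubst` also inverts `𝒢` on the words `(𝒢 x).tail`. -/
def desubst : List Bool → List Bool
  | [] => []
  | true :: t => true :: desubst t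
  | false :: true :: t => true :: desubst t
  | false :: t => false :: desubst t

lemma desubst_applyM (x : List Bool) : desubst (𝒢 x) = x := by
  induction x with
  | nil => rfl
  | cons b x ih =>
    cases b
    · cases x with
      | nil => rfl
      | cons c x => cases c <;> simp_all [desubst]
    · simp_all [desubst]

lemma desubst_tail_applyM_cons_true (x : List Bool) :
    desubst (𝒢 (true :: x)).tail = true :: x := by
  simp [desubst, desubst_applyM]

section ImageG

variable {w w' : ℕ → Bool}

lemma gPos_succ (w : ℕ → Bool) (n : ℕ) : gPos w (n + 1) = gPos w n + bif w n then 2 else 1 := by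
  cases h : w n <;> simp [gPos, pref_succ, h]

lemma gPos_strictMono (w : ℕ → Bool) : StrictMono (gPos w) :=
  strictMono_nat_of_lt_succ fun n => by rw [gPos_succ]; cases w n <;> simp

lemma exists_gPos_le_lt (w : ℕ → Bool) (j : ℕ) : ∃ n, gPos w n ≤ j ∧ j < gPos w (n + 1) := by
  induction j with
  | zero => exact ⟨0, by simp [gPos, pref], (gPos_strictMono w).lt_iff_lt.2 Nat.zero_lt_one⟩
  | succ j ih =>
    obtain ⟨n, h₁, h₂⟩ := ih
    rcases lt_or_ge (j + 1) (gPos w (n + 1)) with h | h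
    · exact ⟨n, by omega, h⟩
    · exact ⟨n + 1, by omega, by have := gPos_strictMono w (Nat.lt_add_one (n + 1)); omega⟩

variable (hM : MorphImage [false] [false, true] w w')
include hM

lemma MorphImage.pref_gPos (n : ℕ) : pref w' (gPos w n) = 𝒢 (pref w n) :=
  (hM.1 n).symm

lemma MorphImage.window_gPos {s q : ℕ} (h : s ≤ q) :
    window w' (gPos w s) (gPos w q - gPos w s) = 𝒢 (window w s (q - s)) := by
  have hle : gPos w s ≤ gPos w q := (gPos_strictMono w).monotone h
  have e₁ := hM.pref_gPos q
  rw [pref_eq_window, ← Nat.add_sub_cancel' hle, window_add, ← pref_eq_window, hM.pref_gPos,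
    pref_eq_window, pref_eq_window, ← Nat.add_sub_cancel' h, window_add, applyM_append,
    zero_add, zero_add, Nat.add_sub_cancel' h] at e₁
  exact List.append_cancel_left e₁

lemma MorphImage.image_letter_at_gPos (n : ℕ) :
    w' (gPos w n) = false ∧ (w n = true → w' (gPos w n + 1) = true) := by
  have h := hM.window_gPos (Nat.le_add_right n 1)
  rw [Nat.add_sub_cancel_left, window_one] at h
  cases hn : w n <;>
    simp only [window, gPos_succ, hn, cond_false, cond_true, add_tsub_cancel_left, List.range_succ,
      List.range_zero, List.nil_append, List.cons_append, List.map_cons, add_zero, List.map_nil,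
      applyM_cons, applyM_nil, List.append_nil, List.cons.injEq, and_true] at h
  exacts [⟨h, nofun⟩, ⟨h.1, fun _ => h.2⟩]

lemma MorphImage.apply_gPos (n : ℕ) : w' (gPos w n) = false :=
  (hM.image_letter_at_gPos n).1

lemma MorphImage.apply_gPos_add_one (n : ℕ) : w' (gPos w n + 1) = w n := by
  cases hn : w n
  · simpa [gPos_succ, hn] using hM.apply_gPos (n + 1)
  · exact (hM.image_letter_at_gPos n).2 hn

lemma MorphImage.exists_gPos_of_false {j : ℕ} (hj : w' j = false) : ∃ n, j = gPos w n := by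
  obtain ⟨n, h₁, h₂⟩ := exists_gPos_le_lt w j
  rw [gPos_succ] at h₂
  refine ⟨n, ?_⟩
  by_contra hne
  cases hwn : w n <;> simp only [hwn, cond_true, cond_false] at h₂
  · omega
  · rw [show j = gPos w n + 1 by omega, hM.apply_gPos_add_one n, hwn] at hj
    exact Bool.noConfusion hj

lemma MorphImage.exists_gPos_of_true {j : ℕ} (hj : w' j = true) : ∃ n, j = gPos w n + 1 := by
  obtain ⟨n, h₁, h₂⟩ := exists_gPos_le_lt w j
  rw [gPos_succ] at h₂
  refine ⟨n, ?_⟩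
  rcases h₁.eq_or_lt with h | h
  · rw [← h, hM.apply_gPos n] at hj
    exact Bool.noConfusion hj
  · cases hwn : w n <;> simp only [hwn, cond_true, cond_false] at h₂ <;> omega

end ImageG

section DesubstG

variable {w w' : ℕ → Bool} (hM : MorphImage [false] [false, true] w w')
include hM

lemma MorphImage.factorInf_desubst {t : List Bool} {b : Bool}
    (h : FactorInf (t ++ [false, b]) w') :
    FactorInf (desubst t ++ [b]) w ∧ t <:+ 𝒢 (desubst t) := by
  obtain ⟨i, hi⟩ := factorInf_iff.1 h
  rw [List.length_append, List.length_cons, List.length_singleton, window_add_two] at hi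
  obtain ⟨ht, hfalse, hb⟩ :
      window w' i t.length = t ∧ w' (i + t.length) = false ∧ w' (i + t.length + 1) = b := by
    simpa using List.append_inj hi (by simp)
  obtain ⟨q, hq⟩ := hM.exists_gPos_of_false hfalse
  obtain ⟨s, hs₁, hs₂⟩ := exists_gPos_le_lt w i
  have hsq : s ≤ q := (gPos_strictMono w).le_iff_le.1 (by omega)
  have hbq : b = w q := by rw [← hb, hq, hM.apply_gPos_add_one]
  set x := window w s (q - s) with hxdef
  have hx : FactorInf (x ++ [b]) w := by
    rw [hbq, show q = s + (q - s) by omega, ← window_one, ← window_add]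
    exact factorInf_window w s _
  have htx : t = (𝒢 x).drop (i - gPos w s) := by
    rw [← hM.window_gPos hsq, drop_window _ _ (by omega), ← ht]
    congr 1 <;> omega
  have hdesubst : desubst t = x := by
    by_cases his : i = gPos w s
    · rw [htx, his, Nat.sub_self, List.drop_zero, desubst_applyM]
    · have hws : w s = true := by
        rw [gPos_succ] at hs₂
        cases h : w s <;> simp only [h, cond_false] at hs₂ ⊢
        omega
      have hstep : gPos w (s + 1) = gPos w s + 2 := by rw [gPos_succ, hws]; rfl
      have hxcons : x = true :: window w (s + 1) (q - (s + 1)) := by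
        have hlt : s < q := (gPos_strictMono w).lt_iff_lt.1 (by omega)
        rw [hxdef, show q - s = 1 + (q - (s + 1)) by omega, window_add, window_one, hws]
        rfl
      rw [htx, show i - gPos w s = 1 by omega, List.drop_one, hxcons,
        desubst_tail_applyM_cons_true]
  exact ⟨hdesubst ▸ hx, hdesubst ▸ htx ▸ List.drop_suffix _ _⟩

lemma MorphImage.factorInf_applyM {x : List Bool} {b : Bool} (h : FactorInf (x ++ [b]) w) :
    FactorInf (𝒢 x ++ [false, b]) w' := by
  obtain ⟨s, hs⟩ := factorInf_iff.1 h
  rw [List.length_append, List.length_singleton, window_add, window_one] at hs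
  obtain ⟨hx, hb⟩ := List.append_inj hs (by simp)
  have hsq : s ≤ s + x.length := Nat.le_add_right _ _
  have hG : window w' (gPos w s) (gPos w (s + x.length) - gPos w s) = 𝒢 x := by
    rw [hM.window_gPos hsq, Nat.add_sub_cancel_left, hx]
  have hlen : (𝒢 x).length = gPos w (s + x.length) - gPos w s := by rw [← hG, length_window]
  refine factorInf_iff.2 ⟨gPos w s, ?_⟩
  rw [List.length_append, hlen, List.length_cons, List.length_singleton, window_add_two, hG,
    Nat.add_sub_cancel' ((gPos_strictMono w).monotone hsq), hM.apply_gPos,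
    hM.apply_gPos_add_one, (List.singleton_inj.1 hb)]

lemma MorphImage.applyM_mem_rightSpecial {x : List Bool} {n : ℕ} (hx : x ∈ rightSpecial w n) :
    𝒢 x ++ [false] ∈ rightSpecial w' ((𝒢 x).length + 1) :=
  ⟨by simp, by simpa using hM.factorInf_applyM hx.2.1, by simpa using hM.factorInf_applyM hx.2.2⟩

lemma MorphImage.exists_rightSpecial_suffix {z : List Bool} {n : ℕ} (hz : z ∈ rightSpecial w' n)
    (hn : 0 < n) : ∃ x m, x ∈ rightSpecial w m ∧ z <:+ 𝒢 x ++ [false] := by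
  obtain ⟨hl, hz₀, hz₁⟩ := hz
  obtain ⟨i, hi⟩ := factorInf_iff.1 hz₁
  rw [List.length_append, List.length_singleton, hl, window_add, window_one] at hi
  obtain ⟨hzi, hlast⟩ := List.append_inj hi (by simp [hl])
  obtain ⟨p, hp⟩ := hM.exists_gPos_of_true (List.singleton_inj.1 hlast)
  set t := window w' i (n - 1)
  have hzt : z = t ++ [false] := by
    rw [← hzi, show n = n - 1 + 1 by omega, window_add, window_one,
      show i + (n - 1) = gPos w p by omega, hM.apply_gPos]
  rw [hzt] at hz₀ hz₁
  obtain ⟨h₀, hsuf⟩ := hM.factorInf_desubst (by simpa using hz₀)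
  obtain ⟨h₁, -⟩ := hM.factorInf_desubst (by simpa using hz₁)
  exact ⟨desubst t, _, ⟨rfl, h₀, h₁⟩, hzt ▸ List.suffix_append_self_iff.2 hsuf⟩

end DesubstG

theorem isSturmianMorphism_G : IsSturmianMorphism [false] [false, true] := by
  intro w w' hw hM
  refine sturmian_iff_ncard_rightSpecial.2 fun n => ?_
  obtain ⟨z, hz⟩ : (rightSpecial w' n).Nonempty := by
    obtain ⟨x, hx⟩ := hw.rightSpecial_nonempty n
    have hlen : n ≤ (𝒢 x).length := hx.1 ▸ length_le_length_applyM (by simp) (by simp) x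
    have := rightSpecial_drop (hM.applyM_mem_rightSpecial hx) ((𝒢 x).length + 1 - n)
    exact ⟨_, by rwa [Nat.sub_sub_self (by omega)] at this⟩
  suffices (rightSpecial w' n).Subsingleton by
    rw [this.eq_singleton_of_mem hz, Set.ncard_singleton]
  intro z₁ hz₁ z₂ hz₂
  have hlen : z₁.length = z₂.length := hz₁.1.trans hz₂.1.symm
  rcases Nat.eq_zero_or_pos n with rfl | hn
  · rw [List.length_eq_zero_iff.1 hz₁.1, List.length_eq_zero_iff.1 hz₂.1]
  obtain ⟨x₁, m₁, hx₁, hs₁⟩ := hM.exists_rightSpecial_suffix hz₁ hn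
  obtain ⟨x₂, m₂, hx₂, hs₂⟩ := hM.exists_rightSpecial_suffix hz₂ hn
  have hG : ∀ {x y : List Bool}, x <:+ y → 𝒢 x ++ [false] <:+ 𝒢 y ++ [false] := fun h =>
    List.suffix_append_self_iff.2 (applyM_suffix _ _ h)
  have key : ∀ {y : List Bool}, z₁ <:+ y → z₂ <:+ y → z₁ = z₂ := fun h₁ h₂ =>
    (List.suffix_of_suffix_length_le h₁ h₂ hlen.le).eq_of_length hlen
  rcases hw.suffix_or_suffix_of_mem_rightSpecial hx₁ hx₂ with h | h
  exacts [key (hs₁.trans (hG h)) hs₂, key hs₁ (hs₂.trans (hG h))]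

lemma isSturmianMorphism_D : IsSturmianMorphism [true, false] [true] :=
  (isSturmianMorphism_singleton (a0 := true) (a1 := false) (by decide)).comp
    isSturmianMorphism_G.swap (by simp) (by simp)

lemma isSturmianMorphism_Dtilde : IsSturmianMorphism [false, true] [true] :=
  isSturmianMorphism_D.of_conj (a := true) fun l => by
    induction l with
    | nil => rfl
    | cons b l ih => cases b <;> simp [← ih]

inductive ChristoffelTree : List Bool → List Bool → Prop
  | root : ChristoffelTree [false] [true]
  | left {u v : List Bool} : ChristoffelTree u v → ChristoffelTree u (u ++ v)
  | right {u v : List Bool} : ChristoffelTree u v → ChristoffelTree (u ++ v) v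

lemma ChristoffelTree.isSturmianMorphism {u v : List Bool} (h : ChristoffelTree u v) :
    IsSturmianMorphism u v := by
  induction h with
  | root => exact isSturmianMorphism_singleton (by decide)
  | left _ ih => simpa [applyM] using ih.comp isSturmianMorphism_G (by simp) (by simp)
  | right _ ih => simpa [applyM] using ih.comp isSturmianMorphism_Dtilde (by simp) (by simp)

section Palindromes

variable {α : Type*}

lemma eq_nil_or_eq_cons_of_cons_palindrome {a : α} {t : List α} (ht : t.reverse = t)
    (h : (a :: t).reverse = a :: t) : t = [] ∨ ∃ r, r.reverse = r ∧ t = a :: r := by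
  rw [List.reverse_cons, ht] at h
  rcases t with _ | ⟨b, r⟩
  · exact Or.inl rfl
  · obtain ⟨rfl, hr⟩ : b = a ∧ r ++ [a] = b :: r := by simpa using h
    rw [List.reverse_cons] at ht
    exact Or.inr ⟨r, List.append_cancel_right (ht.trans hr.symm), rfl⟩

lemma eq_append_of_append_cons_cons_eq {a b : α} {s t : List α}
    (h : t ++ a :: b :: s = s ++ b :: a :: t) (hlt : s.length < t.length) :
    t = s ++ [b] ∨ ∃ r, t = s ++ b :: a :: r ∧ r ++ a :: b :: s = s ++ b :: a :: r := by
  rcases List.append_eq_append_iff.1 h with ⟨q, rfl, -⟩ | ⟨q, rfl, hq⟩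
  · simp at hlt
  rcases q with _ | ⟨c, _ | ⟨d, r⟩⟩
  · simp at hlt
  · obtain ⟨rfl, -⟩ : b = c ∧ _ := by simpa using hq
    exact Or.inl rfl
  · obtain ⟨rfl, rfl, hr⟩ : b = c ∧ a = d ∧ s ++ c :: d :: r = r ++ a :: b :: s := by
      simpa using hq
    exact Or.inr ⟨r, rfl, hr.symm⟩

lemma eq_append_of_palindrome_append_cons_cons_eq {a b : α} {s t : List α}
    (hs : s.reverse = s) (ht : t.reverse = t)
    (h : t ++ a :: b :: s = s ++ b :: a :: t) (hlt : s.length < t.length) :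
    t = s ++ [b] ∨ ∃ r, r.reverse = r ∧ t = s ++ b :: a :: r := by
  refine (eq_append_of_append_cons_cons_eq h hlt).imp_right fun ⟨r, htr, hr⟩ => ⟨r, ?_, htr⟩
  have := ht.trans (htr.trans hr.symm)
  rw [htr] at this
  simpa [hs] using this

end Palindromes

section Christoffel

variable {r s t u v x y : List Bool}

lemma BalancedWord.of_infix (h : BalancedWord y) (hxy : x <:+: y) : BalancedWord x :=
  fun a b ha hb hab => h a b (ha.trans hxy) (hb.trans hxy) hab

lemma BalancedWord.reverse (h : BalancedWord x) : BalancedWord x.reverse := fun a b ha hb hab => by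
  simpa using h a.reverse b.reverse (List.reverse_infix.1 (by simpa using ha))
    (List.reverse_infix.1 (by simpa using hb)) (by simpa using hab)

lemma isLowerChristoffel_of_balanced (hr : r.reverse = r)
    (h : BalancedWord (false :: (r ++ [true]))) : IsLowerChristoffel (false :: (r ++ [true])) :=
  Or.inr (Or.inr ⟨r, ⟨hr, h, by simpa [hr] using h.reverse⟩, rfl⟩)

lemma IsLowerChristoffel.ne_nil (h : IsLowerChristoffel x) : x ≠ [] := by
  rcases h with rfl | rfl | ⟨c, -, rfl⟩ <;> simp

lemma IsLowerChristoffel.eq_cons_append (h : IsLowerChristoffel x) (hx : 2 ≤ x.length) :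
    ∃ c, Central c ∧ x = false :: (c ++ [true]) := by
  rcases h with rfl | rfl | hc
  · simp at hx
  · simp at hx
  · exact hc

lemma exists_isLowerChristoffel_of_central_false_cons (ht : t.reverse = t)
    (hc : Central (false :: t)) :
    ∃ y, IsLowerChristoffel y ∧ false :: (t ++ [true]) = [false] ++ y := by
  rcases eq_nil_or_eq_cons_of_cons_palindrome ht hc.1 with rfl | ⟨r, hr, rfl⟩
  · exact ⟨[true], Or.inr (Or.inl rfl), rfl⟩
  · exact ⟨false :: (r ++ [true]),
      isLowerChristoffel_of_balanced hr (hc.2.1.of_infix ⟨[false, false], [], by simp⟩), rfl⟩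

lemma exists_isLowerChristoffel_of_central_append_true (hs : s.reverse = s)
    (hc : Central (s ++ [true])) :
    ∃ y, IsLowerChristoffel y ∧ false :: (s ++ [true]) = y ++ [true] := by
  have hcons : (true :: s).reverse = true :: s := by simpa [hs] using hc.1.symm
  rcases eq_nil_or_eq_cons_of_cons_palindrome hs hcons with rfl | ⟨r, hr, rfl⟩
  · exact ⟨[false], Or.inl rfl, rfl⟩
  · have hrs : r ++ [true] = true :: r := by simpa [hr] using hs
    have hbal := hc.2.1
    rw [← hrs] at hbal ⊢
    exact ⟨false :: (r ++ [true]),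
      isLowerChristoffel_of_balanced hr (hbal.of_infix ⟨[], [true, true], by simp⟩), by simp⟩

lemma exists_isLowerChristoffel_of_central_append_true_false (hs : s.reverse = s)
    (ht : t.reverse = t) (hc : Central (s ++ true :: false :: t)) :
    (∃ y, IsLowerChristoffel y ∧ false :: (t ++ [true]) = false :: (s ++ [true]) ++ y) ∨
      ∃ y, IsLowerChristoffel y ∧ false :: (s ++ [true]) = y ++ false :: (t ++ [true]) := by
  have hrel : t ++ false :: true :: s = s ++ true :: false :: t := by simpa [hs, ht] using hc.1
  have hbal := hc.2.1
  rcases lt_trichotomy s.length t.length with hlt | heq | hgt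
  · left
    rcases eq_append_of_palindrome_append_cons_cons_eq hs ht hrel hlt with rfl | ⟨r, hr, rfl⟩
    · exact ⟨[true], Or.inr (Or.inl rfl), by simp⟩
    · exact ⟨false :: (r ++ [true]),
        isLowerChristoffel_of_balanced hr
          (hbal.of_infix ⟨false :: (s ++ true :: false :: (s ++ [true])), [], by simp⟩), by simp⟩
  · simpa using (List.append_inj hrel heq.symm).2
  · right
    rcases eq_append_of_palindrome_append_cons_cons_eq ht hs hrel.symm hgt with rfl | ⟨r, hr, rfl⟩
    · have hts : t ++ [false] = false :: t := by simpa [ht] using hs.symm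
      exact ⟨[false], Or.inl rfl, by simp [hts]⟩
    · have hrs : r ++ true :: false :: t = t ++ false :: true :: r := by simpa [ht, hr] using hs
      rw [← hrs] at hbal ⊢
      exact ⟨false :: (r ++ [true]),
        isLowerChristoffel_of_balanced hr
          (hbal.of_infix ⟨[], false :: (t ++ true :: false :: (t ++ [true])), by simp⟩), by simp⟩

end Christoffel

lemma christoffel_pair_cases {u v : List Bool} (hu : IsLowerChristoffel u)
    (hv : IsLowerChristoffel v) (huv : IsLowerChristoffel (u ++ v)) :
    (u = [false] ∧ v = [true]) ∨ (∃ y, IsLowerChristoffel y ∧ v = u ++ y) ∨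
      ∃ y, IsLowerChristoffel y ∧ u = y ++ v := by
  have hlen : 2 ≤ (u ++ v).length := by
    have := List.length_pos_iff.2 hu.ne_nil
    have := List.length_pos_iff.2 hv.ne_nil
    simp only [List.length_append]
    omega
  obtain ⟨c, hc, hcuv⟩ := huv.eq_cons_append hlen
  rcases hu with rfl | rfl | ⟨s, hs, rfl⟩ <;> rcases hv with rfl | rfl | ⟨t, ht, rfl⟩ <;>
    simp only [List.cons_append, List.nil_append, List.cons.injEq, true_and,
      List.append_assoc] at hcuv
  · simpa using congrArg List.getLast? hcuv
  · exact Or.inl ⟨rfl, rfl⟩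
  · obtain rfl : false :: t = c := List.append_cancel_right (by simpa using hcuv)
    exact Or.inr (Or.inl (exists_isLowerChristoffel_of_central_false_cons ht.1 hc))
  · simp at hcuv
  · simp at hcuv
  · simp at hcuv
  · simpa using congrArg List.getLast? hcuv
  · obtain rfl : s ++ [true] = c := List.append_cancel_right (by simpa using hcuv)
    exact Or.inr (Or.inr (exists_isLowerChristoffel_of_central_append_true hs.1 hc))
  · obtain rfl : s ++ true :: false :: t = c := List.append_cancel_right (by simpa using hcuv)
    exact Or.inr (exists_isLowerChristoffel_of_central_append_true_false hs.1 ht.1 hc)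

theorem ChristoffelTree.of_isLowerChristoffel {u v : List Bool} (hu : IsLowerChristoffel u)
    (hv : IsLowerChristoffel v) (huv : IsLowerChristoffel (u ++ v)) : ChristoffelTree u v := by
  induction hn : (u ++ v).length using Nat.strong_induction_on generalizing u v with
  | _ n ih =>
    have hu₀ := List.length_pos_iff.2 hu.ne_nil
    have hv₀ := List.length_pos_iff.2 hv.ne_nil
    rcases christoffel_pair_cases hu hv huv with ⟨rfl, rfl⟩ | ⟨y, hy, rfl⟩ | ⟨y, hy, rfl⟩
    · exact .root
    · exact .left (ih _ (by simp at hn hv₀ ⊢; omega) hu hy hv rfl)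
    · exact .right (ih _ (by simp at hn hu₀ ⊢; omega) hy hv hu rfl)

/-- If `u`, `v`, `uv` are Christoffel words, then the morphisms `0 ↦ u, 1 ↦ v` and
`0 ↦ v, 1 ↦ u` are Sturmian. -/
theorem christoffel_pair_sturmian_morphism (u v : List Bool)
    (hu : IsLowerChristoffel u) (hv : IsLowerChristoffel v)
    (huv : IsLowerChristoffel (u ++ v)) :
    IsSturmianMorphism u v ∧ IsSturmianMorphism v u := by
  have h := (ChristoffelTree.of_isLowerChristoffel hu hv huv).isSturmianMorphism
  exact ⟨h, h.swap⟩
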